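/- arXiv:1611.07256 — 3 statements merged into one kernel-verified Lean document; each statement's English description precedes it below -/
import Mathlib

section
/- Let (X, A, μ) be a measure space with μ(X) < ∞, let Γ be a random closed subset of X with measurable indicator, and let p_Γ(x) = P(x ∈ Γ) be its coverage function. For ρ ∈ [0,1] define the Vorob'ev quantile Q_ρ = {x ∈ X : p_Γ(x) ≥ ρ}. Then for every measurable set M ⊆ X with μ(M) = μ(Q_ρ), one has E[μ(Q_ρ Δ Γ)] ≤ E[μ(M Δ Γ)], i.e. Q_ρ minimizes the expected distance in measure to Γ among all measurable sets of the same measure. -/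
open MeasureTheory Set
open scoped ENNReal symmDiff

/-!
By Fubini, `E[μ (A ∆ Γ)] = ∫_A (1 - p) dμ + ∫_{Aᶜ} p dμ` for every measurable `A`. Comparing this
for `Q` and `M`, the contributions of `Q ∩ M` and of `(Q ∪ M)ᶜ` agree, and what remains is an
exchange of equal masses `μ (Q \ M) = μ (M \ Q)`: since `p ≥ ρ` on `Q \ M` and `p < ρ` on `M \ Q`,
both sides are compared with the same constant-density expression in `ρ`.
-/

section Exchange

variable {X : Type*} [MeasurableSpace X] {μ : Measure X}

lemma setLIntegral_add_setLIntegral_compl_split {s t : Set X} (ht : MeasurableSet t)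
    (f g : X → ℝ≥0∞) :
    ∫⁻ x in s, f x ∂μ + ∫⁻ x in sᶜ, g x ∂μ
      = (∫⁻ x in s ∩ t, f x ∂μ + ∫⁻ x in (s ∪ t)ᶜ, g x ∂μ)
        + (∫⁻ x in s \ t, f x ∂μ + ∫⁻ x in t \ s, g x ∂μ) := by
  rw [← lintegral_inter_add_sdiff f s ht, ← lintegral_inter_add_sdiff g sᶜ ht,
    inter_comm sᶜ t, ← sdiff_eq, sdiff_eq sᶜ t, ← compl_union]
  ring

lemma setLIntegral_one_sub_add_setLIntegral_le_swap {s t : Set X} (hs : MeasurableSet s)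
    (ht : MeasurableSet t) {p : X → ℝ≥0∞} {ρ : ℝ≥0∞} (hps : ∀ x ∈ s, ρ ≤ p x)
    (hpt : ∀ x ∈ t, p x ≤ ρ) (hst : μ s = μ t) :
    ∫⁻ x in s, (1 - p x) ∂μ + ∫⁻ x in t, p x ∂μ
      ≤ ∫⁻ x in t, (1 - p x) ∂μ + ∫⁻ x in s, p x ∂μ :=
  calc ∫⁻ x in s, (1 - p x) ∂μ + ∫⁻ x in t, p x ∂μ
      ≤ ∫⁻ _ in s, (1 - ρ) ∂μ + ∫⁻ _ in t, ρ ∂μ :=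
        add_le_add (setLIntegral_mono' hs fun x hx => tsub_le_tsub_left (hps x hx) 1)
          (setLIntegral_mono' ht hpt)
    _ = ∫⁻ _ in t, (1 - ρ) ∂μ + ∫⁻ _ in s, ρ ∂μ := by simp only [setLIntegral_const, hst]
    _ ≤ ∫⁻ x in t, (1 - p x) ∂μ + ∫⁻ x in s, p x ∂μ :=
        add_le_add (setLIntegral_mono' ht fun x hx => tsub_le_tsub_left (hpt x hx) 1)
          (setLIntegral_mono' hs hps)

end Exchange

section Coverage

variable {X Ω : Type*} [MeasurableSpace X] [MeasurableSpace Ω]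

def coverage (P : Measure Ω) (Γ : Ω → Set X) (x : X) : ℝ≥0∞ := P {ω | x ∈ Γ ω}

variable {P : Measure Ω} {Γ : Ω → Set X}

lemma measurable_coverage [SFinite P] (hΓ : MeasurableSet {q : Ω × X | q.2 ∈ Γ q.1}) :
    Measurable (coverage P Γ) :=
  measurable_measure_prodMk_right hΓ

lemma lintegral_measure_symmDiff_eq (μ : Measure X) [SFinite μ] [IsProbabilityMeasure P]
    (hΓ : MeasurableSet {q : Ω × X | q.2 ∈ Γ q.1}) {A : Set X} (hA : MeasurableSet A) :
    ∫⁻ ω, μ (A ∆ Γ ω) ∂P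
      = ∫⁻ x in A, (1 - coverage P Γ x) ∂μ + ∫⁻ x in Aᶜ, coverage P Γ x ∂μ := by
  classical
  have hS : MeasurableSet {q : Ω × X | q.2 ∈ A ∆ Γ q.1} :=
    (hA.preimage measurable_snd).symmDiff hΓ
  have hsection (x : X) :
      P {ω | x ∈ A ∆ Γ ω} = A.piecewise (fun x => 1 - coverage P Γ x) (coverage P Γ) x := by
    by_cases hx : x ∈ A
    · simp only [mem_symmDiff, hx, true_and, not_true_eq_false, and_false, or_false,
        piecewise_eq_of_mem _ _ _ hx]
      exact prob_compl_eq_one_sub (measurable_prodMk_right hΓ)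
    · simp [mem_symmDiff, hx, coverage]
  calc ∫⁻ ω, μ (A ∆ Γ ω) ∂P = P.prod μ {q | q.2 ∈ A ∆ Γ q.1} := (Measure.prod_apply hS).symm
    _ = ∫⁻ x, P {ω | x ∈ A ∆ Γ ω} ∂μ := Measure.prod_apply_symm hS
    _ = _ := by simp only [hsection, lintegral_piecewise hA]

end Coverage

theorem vorobev_quantile_minimizes_general
    {X : Type*} [MeasurableSpace X] (μ : Measure X) [IsFiniteMeasure μ]
    {Ω : Type*} [MeasurableSpace Ω] (P : Measure Ω) [IsProbabilityMeasure P]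
    (Γ : Ω → Set X)
    (hΓ : MeasurableSet {p : Ω × X | p.2 ∈ Γ p.1})
    (p : X → ℝ≥0∞) (hp : ∀ x, p x = P {ω | x ∈ Γ ω})
    (ρ : ℝ≥0∞)
    (Q : Set X) (hQ : Q = {x | ρ ≤ p x})
    (M : Set X) (hM : MeasurableSet M) (hμM : μ M = μ Q) :
    ∫⁻ ω, μ (Q ∆ Γ ω) ∂P ≤ ∫⁻ ω, μ (M ∆ Γ ω) ∂P := by
  obtain rfl : p = coverage P Γ := funext hp
  subst hQ
  have hQm : MeasurableSet {x | ρ ≤ coverage P Γ x} := measurable_coverage hΓ measurableSet_Ici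
  rw [lintegral_measure_symmDiff_eq μ hΓ hQm, lintegral_measure_symmDiff_eq μ hΓ hM,
    setLIntegral_add_setLIntegral_compl_split hM, setLIntegral_add_setLIntegral_compl_split hQm,
    inter_comm M, union_comm M]
  refine add_le_add_right (setLIntegral_one_sub_add_setLIntegral_le_swap (hQm.diff hM) (hM.diff hQm)
    (fun x hx => hx.1) (fun x hx => le_of_not_ge hx.2) ?_) _
  exact measure_sdiff_symm hQm.nullMeasurableSet hM.nullMeasurableSet hμM.symm (measure_ne_top μ _)

/-- Vorob'ev quantiles minimize the expected distance in measure among sets of equal measure. -/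
theorem vorobev_quantile_minimizes
    {X : Type*} [MeasurableSpace X] (μ : Measure X) [IsFiniteMeasure μ]
    {Ω : Type*} [MeasurableSpace Ω] (P : Measure Ω) [IsProbabilityMeasure P]
    (Γ : Ω → Set X)
    (hΓ : MeasurableSet {p : Ω × X | p.2 ∈ Γ p.1})
    (p : X → ℝ≥0∞) (hp : ∀ x, p x = P {ω | x ∈ Γ ω})
    (ρ : ℝ≥0∞) (hρ : ρ ≤ 1)
    (Q : Set X) (hQ : Q = {x | ρ ≤ p x})
    (M : Set X) (hM : MeasurableSet M) (hμM : μ M = μ Q) :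
    ∫⁻ ω, μ (Q ∆ Γ ω) ∂P ≤ ∫⁻ ω, μ (M ∆ Γ ω) ∂P :=
  vorobev_quantile_minimizes_general μ P Γ hΓ p hp ρ Q hQ M hM hμM
end

section
/- With Γ a random set with coverage function p_Γ in a finite measure space (X, μ), the Vorob'ev uncertainty H(ρ) = E[μ(Γ Δ Q_ρ)] over quantiles Q_ρ = {p_Γ ≥ ρ} is minimized at ρ = 1/2 among all ρ ∈ [0,1]: H(1/2) ≤ H(ρ) for all ρ. -/
open MeasureTheory Set
open scoped ENNReal symmDiff

/-- The Vorob'ev uncertainty `H(ρ) = E[μ(Γ Δ Q_ρ)]` over Vorob'ev quantiles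
`Q_ρ = {p_Γ ≥ ρ}` is minimized at `ρ = 1/2` among all `ρ ∈ [0,1]`. -/
theorem vorobev_uncertainty_minimized_at_median
    {X : Type*} [MeasurableSpace X] (μ : Measure X) [IsFiniteMeasure μ]
    {Ω : Type*} [MeasurableSpace Ω] (P : Measure Ω) [IsProbabilityMeasure P]
    (Γ : Ω → Set X)
    (hΓ : MeasurableSet {p : Ω × X | p.2 ∈ Γ p.1})
    (p : X → ℝ≥0∞) (hp : ∀ x, p x = P {ω | x ∈ Γ ω})
    (Q : ℝ≥0∞ → Set X) (hQ : ∀ ρ, Q ρ = {x | ρ ≤ p x})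
    (H : ℝ≥0∞ → ℝ≥0∞) (hH : ∀ ρ, H ρ = ∫⁻ ω, μ (Γ ω ∆ Q ρ) ∂P)
    (ρ : ℝ≥0∞) (hρ : ρ ≤ 1) :
    H (1 / 2) ≤ H ρ := by
  classical
  set S : Set (Ω × X) := {q : Ω × X | q.2 ∈ Γ q.1} with hS
  have hslice : ∀ x : X, {ω | x ∈ Γ ω} = (fun ω => (ω, x)) ⁻¹' S := fun x => rfl
  have hslicem : ∀ x : X, MeasurableSet {ω | x ∈ Γ ω} := by
    intro x; rw [hslice]; exact (measurable_prodMk_right : Measurable fun ω => (ω, x)) hΓ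
  have hpm : Measurable p := by
    have : p = fun x => P ((fun ω => (ω, x)) ⁻¹' S) := by
      funext x; rw [hp x, hslice]
    rw [this]
    exact measurable_measure_prodMk_right hΓ
  have hQm : ∀ r, MeasurableSet (Q r) := by
    intro r; rw [hQ]; exact measurableSet_le measurable_const hpm
  have hp1 : ∀ x, p x ≤ 1 := by
    intro x; rw [hp]; exact prob_le_one
  -- key integral formula
  have key : ∀ r, H r = ∫⁻ x, (if r ≤ p x then 1 - p x else p x) ∂μ := by
    intro r
    set T : Set (Ω × X) := S ∆ (univ ×ˢ Q r) with hTdef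
    have hT : MeasurableSet T := hΓ.symmDiff (MeasurableSet.univ.prod (hQm r))
    have h1 : ∀ ω, μ (Γ ω ∆ Q r) = ∫⁻ x, T.indicator 1 (ω, x) ∂μ := by
      intro ω
      have hpre : Prod.mk ω ⁻¹' T = Γ ω ∆ Q r := by
        ext x
        simp [hTdef, Set.mem_symmDiff, hS]
      have heq : ∀ x, T.indicator 1 (ω, x) = (Prod.mk ω ⁻¹' T).indicator (1 : X → ℝ≥0∞) x := by
        intro x; by_cases hx : (ω, x) ∈ T <;>
          simp [Set.indicator, Set.mem_preimage, hx]
      rw [lintegral_congr heq, lintegral_indicator_one (measurable_prodMk_left hT), hpre]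
    rw [hH]
    simp_rw [h1]
    rw [lintegral_lintegral_swap]
    · congr 1
      funext x
      have hpre2 : (fun ω => (ω, x)) ⁻¹' T =
          if x ∈ Q r then {ω | x ∈ Γ ω}ᶜ else {ω | x ∈ Γ ω} := by
        by_cases hx : x ∈ Q r <;>
          · ext ω
            simp [hTdef, Set.mem_symmDiff, hS, hx]
      have heq : ∀ ω, T.indicator 1 (ω, x) = ((fun ω => (ω, x)) ⁻¹' T).indicator (1 : Ω → ℝ≥0∞) ω := by
        intro ω; by_cases hω : (ω, x) ∈ T <;>
          simp [Set.indicator, Set.mem_preimage, hω]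
      rw [lintegral_congr heq,
        lintegral_indicator_one ((measurable_prodMk_right : Measurable fun ω => (ω, x)) hT)]
      rw [hpre2]
      have hmemQ : x ∈ Q r ↔ r ≤ p x := by rw [hQ]; rfl
      by_cases hx : r ≤ p x
      · rw [if_pos (hmemQ.mpr hx), if_pos hx,
          prob_compl_eq_one_sub (hslicem x), hp]
      · rw [if_neg (fun h => hx (hmemQ.mp h)), if_neg hx, hp]
    · exact ((measurable_const.indicator hT).comp measurable_id).aemeasurable
  rw [key, key]
  apply lintegral_mono
  intro x
  simp only []
  have h2 : (1 : ℝ≥0∞) - 1 / 2 = 1 / 2 := by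
    rw [ENNReal.sub_half ENNReal.one_ne_top]
  by_cases h : (1 / 2 : ℝ≥0∞) ≤ p x
  · rw [if_pos h]
    by_cases h' : ρ ≤ p x
    · rw [if_pos h']
    · rw [if_neg h']
      calc 1 - p x ≤ 1 - 1 / 2 := tsub_le_tsub_left h 1
        _ = 1 / 2 := h2
        _ ≤ p x := h
  · rw [if_neg h]
    push_neg at h
    by_cases h' : ρ ≤ p x
    · rw [if_pos h']
      calc p x ≤ 1 / 2 := h.le
        _ = 1 - 1 / 2 := h2.symm
        _ ≤ 1 - p x := tsub_le_tsub_left h.le 1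
    · rw [if_neg h']
end

section
/- Let Y ∼ N(0, γ) with γ > 0, a ∈ ℝ, ρ ∈ (0,1), and Φ the standard normal CDF. Then E[Φ(a + Y)·1_{Φ(a+Y) < ρ}] = Φ₂((a, Φ⁻¹(ρ) − a); [[1+γ, −γ],[−γ, γ]]), where Φ₂(v; Σ) denotes P(W₁ ≤ v₁, W₂ ≤ v₂) for (W₁,W₂) centered bivariate Gaussian with covariance Σ. -/
/-!
Since `Φ` is strictly increasing, `Φ(a + Y) < Φ(s)` iff `Y < s - a`, so the left-hand side is
`∫_{y < s - a} Φ(a + y) dγ(y)`, and `y < s - a` may be relaxed to `y ≤ s - a` because `N(0, γ)`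
has no atoms. On the other side, `Φ(a + y) = P(N₁ ≤ a + y)`, so by independence (Fubini on the
product of the laws of `N₁` and `Y`) this integral is `P(N₁ - Y ≤ a, Y ≤ s - a)`.
-/

open MeasureTheory ProbabilityTheory Set
open scoped ENNReal

lemma strictMono_cdf_of_absolutelyContinuous (μ : Measure ℝ) [IsProbabilityMeasure μ]
    (hμ : volume ≪ μ) : StrictMono (cdf μ) := by
  intro x y hxy
  have hIoc : μ (Ioc x y) ≠ 0 := fun h0 =>
    hxy.not_ge (by simpa [Real.volume_Ioc] using hμ h0)
  rw [cdf_eq_real, cdf_eq_real, ← Iic_union_Ioc_eq_Iic hxy.le,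
    measureReal_union (Iic_disjoint_Ioc le_rfl) measurableSet_Ioc, lt_add_iff_pos_right]
  exact ENNReal.toReal_pos hIoc (measure_ne_top _ _)

lemma setIntegral_cdf_eq_toReal_setLIntegral (ν : Measure ℝ) [IsProbabilityMeasure ν]
    {μ : Measure ℝ} {f : ℝ → ℝ} (hf : Measurable f) (s : Set ℝ) :
    ∫ y in s, cdf ν (f y) ∂μ = (∫⁻ y in s, ν (Iic (f y)) ∂μ).toReal := by
  rw [integral_eq_lintegral_of_nonneg_ae (ae_of_all _ fun y => cdf_nonneg ν _)
    ((monotone_cdf ν).measurable.comp hf).aestronglyMeasurable]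
  simp_rw [ofReal_cdf]

lemma measurableSet_sub_le_and_snd_le (a t : ℝ) :
    MeasurableSet {p : ℝ × ℝ | p.1 - p.2 ≤ a ∧ p.2 ≤ t} :=
  (measurableSet_le (measurable_fst.sub measurable_snd) measurable_const).inter
    (measurableSet_le measurable_snd measurable_const)

lemma MeasureTheory.Measure.prod_apply_sub_le_and_snd_le (ν μ : Measure ℝ) [SFinite ν]
    [SFinite μ] (a t : ℝ) :
    ν.prod μ {p | p.1 - p.2 ≤ a ∧ p.2 ≤ t} = ∫⁻ y in Iic t, ν (Iic (a + y)) ∂μ := by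
  have hslice : ∀ y, ν ((fun x => (x, y)) ⁻¹' {p : ℝ × ℝ | p.1 - p.2 ≤ a ∧ p.2 ≤ t})
      = (Iic t).indicator (fun y => ν (Iic (a + y))) y := by
    intro y
    by_cases hy : y ≤ t
    · rw [indicator_of_mem (mem_Iic.2 hy)]
      congr 1
      ext x
      simp [hy]
    · simp [hy]
  rw [Measure.prod_apply_symm (measurableSet_sub_le_and_snd_le a t),
    ← lintegral_indicator measurableSet_Iic]
  simp_rw [hslice]

lemma ProbabilityTheory.IndepFun.measure_sub_le_and_le {Ω : Type*} [MeasurableSpace Ω]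
    {P : Measure Ω} [IsFiniteMeasure P] {X Y : Ω → ℝ} (hXY : IndepFun X Y P)
    (hX : Measurable X) (hY : Measurable Y) (a t : ℝ) :
    P {ω | X ω - Y ω ≤ a ∧ Y ω ≤ t} = ∫⁻ y in Iic t, P.map X (Iic (a + y)) ∂P.map Y := by
  rw [← Measure.prod_apply_sub_le_and_snd_le,
    ← (indepFun_iff_map_prod_eq_prod_map_map hX.aemeasurable hY.aemeasurable).1 hXY,
    Measure.map_apply (hX.prodMk hY) (measurableSet_sub_le_and_snd_le a t)]
  rfl

theorem expectation_truncated_coverage_eq_bivariate_cdf_general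
    {Ω : Type*} [MeasurableSpace Ω] (P : Measure Ω) [IsProbabilityMeasure P]
    (Y N₁ : Ω → ℝ) (hYm : Measurable Y) (hNm : Measurable N₁)
    (γ : ℝ) (hγ : 0 < γ)
    (hY : Measure.map Y P = gaussianReal 0 γ.toNNReal)
    (hN : Measure.map N₁ P = gaussianReal 0 1)
    (hindep : IndepFun N₁ Y P)
    (Φ : ℝ → ℝ) (hΦ : ∀ x, Φ x = cdf (gaussianReal 0 1) x)
    (a ρ : ℝ)
    (s : ℝ) (hs : Φ s = ρ) :
    ∫ ω, Φ (a + Y ω) * {ω' | Φ (a + Y ω') < ρ}.indicator (fun _ => (1 : ℝ)) ω ∂P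
      = (P {ω | N₁ ω - Y ω ≤ a ∧ Y ω ≤ s - a}).toReal := by
  obtain rfl : Φ = cdf (gaussianReal 0 1) := funext hΦ
  subst hs
  have htrunc : {ω | cdf (gaussianReal 0 1) (a + Y ω) < cdf (gaussianReal 0 1) s}
      = Y ⁻¹' Iio (s - a) := by
    ext ω
    rw [mem_ofPred_eq, (strictMono_cdf_of_absolutelyContinuous _
      (gaussianReal_absolutelyContinuous' 0 one_ne_zero)).lt_iff_lt]
    simp [lt_sub_iff_add_lt']
  have hcdf_meas : Measurable fun y => cdf (gaussianReal 0 1) (a + y) :=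
    (monotone_cdf _).measurable.comp (measurable_const_add a)
  have hγ0 : γ.toNNReal ≠ 0 := by simpa using hγ
  calc _ = ∫ y in Iio (s - a), cdf (gaussianReal 0 1) (a + y) ∂P.map Y := by
        rw [setIntegral_map measurableSet_Iio hcdf_meas.aestronglyMeasurable hYm.aemeasurable,
          ← integral_indicator (hYm measurableSet_Iio), htrunc]
        congr with ω
        simp [indicator]
    _ = ∫ y in Iic (s - a), cdf (gaussianReal 0 1) (a + y) ∂P.map Y := by
        rw [hY]
        exact setIntegral_congr_set
          (Iio_ae_eq_Iic' (gaussianReal_absolutelyContinuous 0 hγ0 (measure_singleton _)))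
    _ = _ := by
        rw [setIntegral_cdf_eq_toReal_setLIntegral _ (measurable_const_add a),
          hindep.measure_sub_le_and_le hNm hYm, hN]

/-- For `Y ∼ N(0,γ)` with `γ > 0`, `ρ ∈ (0,1)` and `Φ` the standard normal CDF,
`E[Φ(a + Y)·1_{Φ(a+Y) < ρ}] = Φ₂((a, Φ⁻¹(ρ) − a); [[1+γ, −γ],[−γ, γ]])`, where the
bivariate Gaussian CDF is realized by the pair `(N₁ − Y, Y)` for `N₁ ∼ N(0,1)`
independent of `Y`: the expectation equals `P(N₁ − Y ≤ a, Y ≤ Φ⁻¹(ρ) − a)`. -/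
theorem expectation_truncated_coverage_eq_bivariate_cdf
    {Ω : Type*} [MeasurableSpace Ω] (P : Measure Ω) [IsProbabilityMeasure P]
    (Y N₁ : Ω → ℝ) (hYm : Measurable Y) (hNm : Measurable N₁)
    (γ : ℝ) (hγ : 0 < γ)
    (hY : Measure.map Y P = gaussianReal 0 γ.toNNReal)
    (hN : Measure.map N₁ P = gaussianReal 0 1)
    (hindep : IndepFun N₁ Y P)
    (Φ : ℝ → ℝ) (hΦ : ∀ x, Φ x = cdf (gaussianReal 0 1) x)
    (a ρ : ℝ) (hρ : ρ ∈ Ioo (0 : ℝ) 1)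
    (s : ℝ) (hs : Φ s = ρ) :
    ∫ ω, Φ (a + Y ω) * {ω' | Φ (a + Y ω') < ρ}.indicator (fun _ => (1 : ℝ)) ω ∂P
      = (P {ω | N₁ ω - Y ω ≤ a ∧ Y ω ≤ s - a}).toReal :=
  expectation_truncated_coverage_eq_bivariate_cdf_general P Y N₁ hYm hNm γ hγ hY hN hindep Φ hΦ a ρ
    s hs
end
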